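/- arXiv:2311.17934 — 12 statements merged into one kernel-verified Lean document; each statement's English description precedes it below -/
import Mathlib

section
/- If L is a lattice with at least two elements, then the set 𝔐(L) of comaximal pairs of L is nonempty. -/
/-- An ideal of a lattice: nonempty, downward closed, closed under finite joins. -/
def IsLatIdeal {L : Type*} [Lattice L] (I : Set L) : Prop :=
  I.Nonempty ∧ (∀ ⦃x y : L⦄, x ≤ y → y ∈ I → x ∈ I) ∧
    ∀ ⦃x : L⦄, x ∈ I → ∀ ⦃y : L⦄, y ∈ I → x ⊔ y ∈ I

/-- A filter of a lattice: nonempty, upward closed, closed under finite meets. -/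
def IsLatFilter {L : Type*} [Lattice L] (F : Set L) : Prop :=
  F.Nonempty ∧ (∀ ⦃x y : L⦄, x ≤ y → x ∈ F → y ∈ F) ∧
    ∀ ⦃x : L⦄, x ∈ F → ∀ ⦃y : L⦄, y ∈ F → x ⊓ y ∈ F

/-- A comaximal pair of a lattice. -/
def IsComaximalPair {L : Type*} [Lattice L] (I F : Set L) : Prop :=
  IsLatIdeal I ∧ IsLatFilter F ∧ I ∩ F = ∅ ∧
    (∀ J : Set L, IsLatIdeal J → I ⊂ J → (J ∩ F).Nonempty) ∧
    (∀ K : Set L, IsLatFilter K → F ⊂ K → (I ∩ K).Nonempty)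

/-- 𝔐(L): the set (type) of comaximal pairs of L. -/
abbrev ComaxPairs (L : Type*) [Lattice L] :=
  {p : Set L × Set L // IsComaximalPair p.1 p.2}

/-- δ_L(x) = {(I,F) ∈ 𝔐(L) : x ∉ I}. -/
def deltaL {L : Type*} [Lattice L] (x : L) : Set (ComaxPairs L) :=
  {p | x ∉ p.1.1}

/-- ε_L(x) = {(I,F) ∈ 𝔐(L) : x ∈ F}. -/
def epsL {L : Type*} [Lattice L] (x : L) : Set (ComaxPairs L) :=
  {p | x ∈ p.1.2}

/-- τ_L : the topology on 𝔐(L) generated by the subbasis {δ_L(x) : x ∈ L}. -/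
def tauL (L : Type*) [Lattice L] : TopologicalSpace (ComaxPairs L) :=
  TopologicalSpace.generateFrom (Set.range (deltaL (L := L)))

/-- σ_L : the topology on 𝔐(L) generated by the subbasis {ε_L(x) : x ∈ L}. -/
def sigmaL (L : Type*) [Lattice L] : TopologicalSpace (ComaxPairs L) :=
  TopologicalSpace.generateFrom (Set.range (epsL (L := L)))

/-- Distributivity of a lattice. -/
def IsDistrib (L : Type*) [Lattice L] : Prop :=
  ∀ x y z : L, x ⊓ (y ⊔ z) = (x ⊓ y) ⊔ (x ⊓ z)

/-- A prime ideal of a lattice. -/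
def IsPrimeIdeal {L : Type*} [Lattice L] (P : Set L) : Prop :=
  IsLatIdeal P ∧ P ≠ Set.univ ∧ ∀ x y : L, x ⊓ y ∈ P → x ∈ P ∨ y ∈ P

/-- The transition function d on subsets of 𝔐(L). -/
def dTrans {L : Type*} [Lattice L] (A : Set (ComaxPairs L)) : Set (ComaxPairs L) :=
  {p | ∀ q : ComaxPairs L, p.1.2 ⊆ q.1.2 → q ∈ A}

/-- The transition function i on subsets of 𝔐(L). -/
def iTrans {L : Type*} [Lattice L] (A : Set (ComaxPairs L)) : Set (ComaxPairs L) :=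
  {p | ∃ q ∈ A, p.1.1 ⊆ q.1.1}

/-- a lattice with at least two elements has a comaximal pair. -/
theorem comaxPairs_nonempty {L : Type*} [Lattice L] (h : ∃ a b : L, a ≠ b) :
    Nonempty (ComaxPairs L) := by
  -- get x < y
  obtain ⟨a, b, hab⟩ := h
  obtain ⟨x, y, hxy⟩ : ∃ x y : L, x < y := by
    rcases eq_or_ne (a ⊓ b) a with hba | hba
    · exact ⟨a, b, lt_of_le_of_ne (inf_eq_left.mp hba) hab⟩
    · exact ⟨a ⊓ b, a, lt_of_le_of_ne inf_le_left hba⟩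
  set S : Set (Set L × Set L) :=
    {p | IsLatIdeal p.1 ∧ IsLatFilter p.2 ∧ p.1 ∩ p.2 = ∅}
  have hbase : (Set.Iic x, Set.Ici y) ∈ S := by
    refine ⟨⟨⟨x, le_rfl⟩, fun u v huv hv => huv.trans hv,
        fun u hu v hv => sup_le hu hv⟩,
      ⟨⟨y, le_rfl⟩, fun u v huv hu => hu.trans huv,
        fun u hu v hv => le_inf hu hv⟩, ?_⟩
    ext z
    simp only [Set.mem_inter_iff, Set.mem_Iic, Set.mem_Ici, Set.mem_empty_iff_false, iff_false,
      not_and]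
    intro hz hz'
    exact absurd (hz'.trans hz) (not_le_of_gt hxy)
  have hchain : ∀ c ⊆ S, IsChain (· ≤ ·) c → ∀ p ∈ c,
      ∃ ub ∈ S, ∀ z ∈ c, z ≤ ub := by
    rintro c hcS hc p hpc
    refine ⟨(⋃ q ∈ c, q.1, ⋃ q ∈ c, q.2), ⟨?_, ?_, ?_⟩, ?_⟩
    · refine ⟨?_, ?_, ?_⟩
      · obtain ⟨u, hu⟩ := (hcS hpc).1.1
        exact ⟨u, Set.mem_biUnion hpc hu⟩
      · intro u v huv hv
        obtain ⟨q, hqc, hv⟩ := Set.mem_iUnion₂.mp hv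
        exact Set.mem_biUnion hqc ((hcS hqc).1.2.1 huv hv)
      · intro u hu v hv
        obtain ⟨q, hqc, hu⟩ := Set.mem_iUnion₂.mp hu
        obtain ⟨r, hrc, hv⟩ := Set.mem_iUnion₂.mp hv
        rcases hc.total hqc hrc with hqr | hrq
        · exact Set.mem_biUnion hrc ((hcS hrc).1.2.2 (hqr.1 hu) hv)
        · exact Set.mem_biUnion hqc ((hcS hqc).1.2.2 hu (hrq.1 hv))
    · refine ⟨?_, ?_, ?_⟩
      · obtain ⟨u, hu⟩ := (hcS hpc).2.1.1
        exact ⟨u, Set.mem_biUnion hpc hu⟩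
      · intro u v huv hu
        obtain ⟨q, hqc, hu⟩ := Set.mem_iUnion₂.mp hu
        exact Set.mem_biUnion hqc ((hcS hqc).2.1.2.1 huv hu)
      · intro u hu v hv
        obtain ⟨q, hqc, hu⟩ := Set.mem_iUnion₂.mp hu
        obtain ⟨r, hrc, hv⟩ := Set.mem_iUnion₂.mp hv
        rcases hc.total hqc hrc with hqr | hrq
        · exact Set.mem_biUnion hrc ((hcS hrc).2.1.2.2 (hqr.2 hu) hv)
        · exact Set.mem_biUnion hqc ((hcS hqc).2.1.2.2 hu (hrq.2 hv))
    · ext z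
      simp only [Set.mem_inter_iff, Set.mem_empty_iff_false, iff_false, not_and]
      intro hz hz'
      obtain ⟨q, hqc, hz⟩ := Set.mem_iUnion₂.mp hz
      obtain ⟨r, hrc, hz'⟩ := Set.mem_iUnion₂.mp hz'
      rcases hc.total hqc hrc with hqr | hrq
      · have : z ∈ r.1 ∩ r.2 := ⟨hqr.1 hz, hz'⟩
        simpa [(hcS hrc).2.2] using this
      · have : z ∈ q.1 ∩ q.2 := ⟨hz, hrq.2 hz'⟩
        simpa [(hcS hqc).2.2] using this
    · intro q hqc
      exact ⟨Set.subset_biUnion_of_mem hqc, Set.subset_biUnion_of_mem hqc⟩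
  obtain ⟨m, -, hmS, hmax⟩ := zorn_le_nonempty₀ S hchain _ hbase
  obtain ⟨hI, hF, hIF⟩ := hmS
  refine ⟨⟨m, hI, hF, hIF, ?_, ?_⟩⟩
  · intro J hJ hIJ
    by_contra hne
    rw [Set.not_nonempty_iff_eq_empty] at hne
    have : (J, m.2) ≤ (m.1, m.2) := hmax ⟨hJ, hF, hne⟩ ⟨hIJ.le, le_rfl⟩
    exact hIJ.not_ge this.1
  · intro K hK hFK
    by_contra hne
    rw [Set.not_nonempty_iff_eq_empty] at hne
    have : (m.1, K) ≤ (m.1, m.2) := hmax ⟨hI, hK, hne⟩ ⟨le_rfl, hFK.le⟩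
    exact hFK.not_ge this.2
end

section
/- A lattice L is distributive if and only if every comaximal pair of L has the form (P, L \ P) for some prime ideal P of L. -/
section AuxLemmas

variable {L : Type*} [Lattice L]

lemma iic_isLatIdeal (u : L) : IsLatIdeal (Set.Iic u) :=
  ⟨⟨u, le_refl u⟩, fun _ _ hxy hy => le_trans hxy hy, fun _ hx _ hy => sup_le hx hy⟩

lemma ici_isLatFilter (v : L) : IsLatFilter (Set.Ici v) :=
  ⟨⟨v, le_refl v⟩, fun _ _ hxy hx => le_trans hx hxy, fun _ hx _ hy => le_inf hx hy⟩

lemma exists_maximal_ideal_disjoint (I₀ F₀ : Set L) (hI₀ : IsLatIdeal I₀)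
    (hdisj : I₀ ∩ F₀ = ∅) :
    ∃ I, IsLatIdeal I ∧ I₀ ⊆ I ∧ I ∩ F₀ = ∅ ∧
      ∀ J, IsLatIdeal J → J ∩ F₀ = ∅ → I ⊆ J → J = I := by
  have hub : ∀ c ⊆ {J : Set L | IsLatIdeal J ∧ J ∩ F₀ = ∅}, IsChain (· ⊆ ·) c →
      c.Nonempty → ∃ ub ∈ {J : Set L | IsLatIdeal J ∧ J ∩ F₀ = ∅}, ∀ s ∈ c, s ⊆ ub := by
    intro c hcS hchain hcne
    refine ⟨⋃₀ c, ⟨⟨?_, ?_, ?_⟩, ?_⟩, fun s hs => Set.subset_sUnion_of_mem hs⟩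
    · obtain ⟨s, hs⟩ := hcne
      obtain ⟨x, hx⟩ := (hcS hs).1.1
      exact ⟨x, s, hs, hx⟩
    · rintro x y hxy ⟨s, hs, hys⟩
      exact ⟨s, hs, (hcS hs).1.2.1 hxy hys⟩
    · rintro x ⟨s, hs, hxs⟩ y ⟨t, ht, hyt⟩
      rcases hchain.total hs ht with h | h
      · exact ⟨t, ht, (hcS ht).1.2.2 (h hxs) hyt⟩
      · exact ⟨s, hs, (hcS hs).1.2.2 hxs (h hyt)⟩
    · apply Set.eq_empty_iff_forall_notMem.2
      rintro x ⟨⟨s, hs, hxs⟩, hxF⟩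
      exact Set.eq_empty_iff_forall_notMem.1 (hcS hs).2 x ⟨hxs, hxF⟩
  obtain ⟨I, hsub, hmax⟩ := zorn_subset_nonempty
      {J : Set L | IsLatIdeal J ∧ J ∩ F₀ = ∅} hub I₀ ⟨hI₀, hdisj⟩
  exact ⟨I, hmax.prop.1, hsub, hmax.prop.2,
      fun J hJ hJd hIJ => hmax.eq_of_ge ⟨hJ, hJd⟩ hIJ⟩

lemma exists_maximal_filter_disjoint (F₀ I₀ : Set L) (hF₀ : IsLatFilter F₀)
    (hdisj : I₀ ∩ F₀ = ∅) :
    ∃ F, IsLatFilter F ∧ F₀ ⊆ F ∧ I₀ ∩ F = ∅ ∧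
      ∀ K, IsLatFilter K → I₀ ∩ K = ∅ → F ⊆ K → K = F := by
  have hub : ∀ c ⊆ {K : Set L | IsLatFilter K ∧ I₀ ∩ K = ∅}, IsChain (· ⊆ ·) c →
      c.Nonempty → ∃ ub ∈ {K : Set L | IsLatFilter K ∧ I₀ ∩ K = ∅}, ∀ s ∈ c, s ⊆ ub := by
    intro c hcS hchain hcne
    refine ⟨⋃₀ c, ⟨⟨?_, ?_, ?_⟩, ?_⟩, fun s hs => Set.subset_sUnion_of_mem hs⟩
    · obtain ⟨s, hs⟩ := hcne
      obtain ⟨x, hx⟩ := (hcS hs).1.1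
      exact ⟨x, s, hs, hx⟩
    · rintro x y hxy ⟨s, hs, hxs⟩
      exact ⟨s, hs, (hcS hs).1.2.1 hxy hxs⟩
    · rintro x ⟨s, hs, hxs⟩ y ⟨t, ht, hyt⟩
      rcases hchain.total hs ht with h | h
      · exact ⟨t, ht, (hcS ht).1.2.2 (h hxs) hyt⟩
      · exact ⟨s, hs, (hcS hs).1.2.2 hxs (h hyt)⟩
    · apply Set.eq_empty_iff_forall_notMem.2
      rintro x ⟨hxI, ⟨s, hs, hxs⟩⟩
      exact Set.eq_empty_iff_forall_notMem.1 (hcS hs).2 x ⟨hxI, hxs⟩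
  obtain ⟨F, hsub, hmax⟩ := zorn_subset_nonempty
      {K : Set L | IsLatFilter K ∧ I₀ ∩ K = ∅} hub F₀ ⟨hF₀, hdisj⟩
  exact ⟨F, hmax.prop.1, hsub, hmax.prop.2,
      fun K hK hKd hFK => hmax.eq_of_ge ⟨hK, hKd⟩ hFK⟩

end AuxLemmas

/-- L is distributive iff every comaximal pair is (P, L \ P) for a prime
ideal P. -/
theorem distrib_iff_comaximal_pairs_prime {L : Type*} [Lattice L] :
    IsDistrib L ↔
      ∀ p : ComaxPairs L, ∃ P : Set L, IsPrimeIdeal P ∧ p.1 = (P, Pᶜ) := by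
  constructor
  · intro hd p
    obtain ⟨⟨hI, hF, hdisj, hmaxI, hmaxF⟩⟩ : ∃ _ : IsComaximalPair p.1.1 p.1.2, True :=
      ⟨p.2, trivial⟩
    set I := p.1.1 with hIdef
    set F := p.1.2 with hFdef
    have hnotboth : ∀ a : L, a ∈ I → a ∉ F := fun a haI haF =>
      Set.eq_empty_iff_forall_notMem.1 hdisj a ⟨haI, haF⟩
    have hcov : ∀ a : L, a ∉ I → a ∈ F := by
      intro a haI
      by_contra haF
      -- ideal generated by I ∪ {a}
      set J : Set L := {x | ∃ i ∈ I, x ≤ i ⊔ a} with hJdef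
      have hJ : IsLatIdeal J := by
        refine ⟨?_, ?_, ?_⟩
        · obtain ⟨i, hi⟩ := hI.1
          exact ⟨a, i, hi, le_sup_right⟩
        · rintro x y hxy ⟨i, hiI, hyi⟩
          exact ⟨i, hiI, hxy.trans hyi⟩
        · rintro x ⟨i, hiI, hxi⟩ y ⟨j, hjI, hyj⟩
          refine ⟨i ⊔ j, hI.2.2 hiI hjI, sup_le ?_ ?_⟩
          · exact hxi.trans (sup_le_sup_right le_sup_left a)
          · exact hyj.trans (sup_le_sup_right le_sup_right a)
      have hIJ : I ⊂ J := by
        constructor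
        · intro x hxI
          exact ⟨x, hxI, le_sup_left⟩
        · intro hsub
          obtain ⟨i, hiI⟩ := hI.1
          exact haI (hsub ⟨i, hiI, le_sup_right⟩)
      obtain ⟨f, ⟨i, hiI, hfi⟩, hfF⟩ := hmaxI J hJ hIJ
      -- filter generated by F ∪ {a}
      set K : Set L := {x | ∃ g ∈ F, g ⊓ a ≤ x} with hKdef
      have hK : IsLatFilter K := by
        refine ⟨?_, ?_, ?_⟩
        · obtain ⟨g, hg⟩ := hF.1
          exact ⟨a, g, hg, inf_le_right⟩
        · rintro x y hxy ⟨g, hgF, hgx⟩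
          exact ⟨g, hgF, hgx.trans hxy⟩
        · rintro x ⟨g, hgF, hgx⟩ y ⟨g', hg'F, hg'y⟩
          refine ⟨g ⊓ g', hF.2.2 hgF hg'F, le_inf ?_ ?_⟩
          · exact (inf_le_inf_right a inf_le_left).trans hgx
          · exact (inf_le_inf_right a inf_le_right).trans hg'y
      have hFK : F ⊂ K := by
        constructor
        · intro x hxF
          exact ⟨x, hxF, inf_le_left⟩
        · intro hsub
          obtain ⟨g, hgF⟩ := hF.1
          exact haF (hF.2.1 inf_le_right (hsub ⟨g, hgF, le_refl _⟩))
      obtain ⟨i', hi'I, g, hgF, hgi'⟩ := hmaxF K hK hFK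
      -- derive contradiction
      set w := f ⊓ g with hwdef
      have hwF : w ∈ F := hF.2.2 hfF hgF
      have hw1 : w ≤ i ⊔ a := le_trans inf_le_left hfi
      have hw : w = (w ⊓ i) ⊔ (w ⊓ a) := by
        have := hd w i a
        rw [← this, inf_eq_left.2 hw1]
      have hwi : w ⊓ i ∈ I := hI.2.1 inf_le_right hiI
      have hwa : w ⊓ a ∈ I := hI.2.1 (le_trans (inf_le_inf_right a inf_le_right) hgi') hi'I
      have hwI : w ∈ I := by
        rw [hw]; exact hI.2.2 hwi hwa
      exact hnotboth w hwI hwF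
    refine ⟨I, ⟨hI, ?_, ?_⟩, ?_⟩
    · intro huniv
      obtain ⟨g, hgF⟩ := hF.1
      exact hnotboth g (huniv ▸ Set.mem_univ g) hgF
    · intro x y hxy
      by_contra hcon
      push_neg at hcon
      exact hnotboth _ hxy (hF.2.2 (hcov x hcon.1) (hcov y hcon.2))
    · have hFc : F = Iᶜ := by
        ext a
        exact ⟨fun haF haI => hnotboth a haI haF, hcov a⟩
      have : p.1 = (p.1.1, p.1.2) := rfl
      rw [this, ← hIdef, ← hFdef, hFc]
  · intro h
    by_contra hnd
    unfold IsDistrib at hnd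
    push_neg at hnd
    obtain ⟨x, y, z, hne⟩ := hnd
    set u := (x ⊓ y) ⊔ (x ⊓ z) with hudef
    set v := x ⊓ (y ⊔ z) with hvdef
    have huv : u ≤ v := le_inf_sup
    have hdisj0 : Set.Iic u ∩ Set.Ici v = ∅ := by
      apply Set.eq_empty_iff_forall_notMem.2
      rintro w ⟨hwu, hvw⟩
      exact hne (le_antisymm (le_trans hvw hwu) huv)
    obtain ⟨I, hI, hI0, hIdisj, hImax⟩ :=
      exists_maximal_ideal_disjoint (Set.Iic u) (Set.Ici v) (iic_isLatIdeal u) hdisj0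
    obtain ⟨F, hF, hF0, hFdisj, hFmax⟩ :=
      exists_maximal_filter_disjoint (Set.Ici v) I (ici_isLatFilter v) hIdisj
    have hcomax : IsComaximalPair I F := by
      refine ⟨hI, hF, hFdisj, ?_, ?_⟩
      · intro J hJ hIJ
        by_contra hcon
        rw [Set.not_nonempty_iff_eq_empty] at hcon
        have hJd : J ∩ Set.Ici v = ∅ := by
          apply Set.eq_empty_iff_forall_notMem.2
          rintro w ⟨hwJ, hwv⟩
          exact Set.eq_empty_iff_forall_notMem.1 hcon w ⟨hwJ, hF0 hwv⟩
        exact hIJ.ne' (hImax J hJ hJd hIJ.subset)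
      · intro K hK hFK
        by_contra hcon
        rw [Set.not_nonempty_iff_eq_empty] at hcon
        exact hFK.ne' (hFmax K hK hcon hFK.subset)
    obtain ⟨P, ⟨hPideal, _, hPprime⟩, hPeq⟩ := h ⟨(I, F), hcomax⟩
    rw [Prod.ext_iff] at hPeq
    obtain ⟨hIP, hFP⟩ := hPeq
    simp only at hIP hFP
    have huP : u ∈ P := hIP ▸ hI0 (le_refl u)
    have hvP : v ∉ P := by
      have : v ∈ F := hF0 (le_refl v)
      rw [hFP] at this
      exact this
    have hxP : x ∉ P := fun hxP => hvP (hPideal.2.1 inf_le_left hxP)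
    have hyP : y ∈ P := by
      rcases hPprime x y (hPideal.2.1 le_sup_left huP) with h' | h'
      · exact absurd h' hxP
      · exact h'
    have hzP : z ∈ P := by
      rcases hPprime x z (hPideal.2.1 le_sup_right huP) with h' | h'
      · exact absurd h' hxP
      · exact h'
    exact hvP (hPideal.2.1 inf_le_right (hPideal.2.2 hyP hzP))
end

section
/- For any lattice L, the functions δ_L : L → 𝒫(𝔐(L)) and ε_L : L → 𝒫(𝔐(L)) are injective. -/

lemma exists_comax_extend {L : Type*} [Lattice L] {I F : Set L}
    (hI : IsLatIdeal I) (hF : IsLatFilter F) (hd : I ∩ F = ∅) :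
    ∃ I' F', IsComaximalPair I' F' ∧ I ⊆ I' ∧ F ⊆ F' := by
  -- Step 1: maximal ideal M ⊇ I disjoint from F
  obtain ⟨M, hIM0, hMmax⟩ := zorn_subset_nonempty
      {J : Set L | IsLatIdeal J ∧ I ⊆ J ∧ J ∩ F = ∅}
      (fun c hc hchain hcne => by
        refine ⟨⋃₀ c, ⟨⟨?_, ?_, ?_⟩, ?_, ?_⟩, fun J hJ => Set.subset_sUnion_of_mem hJ⟩
        · obtain ⟨J, hJ⟩ := hcne
          obtain ⟨a, ha⟩ := (hc hJ).1.1
          exact ⟨a, J, hJ, ha⟩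
        · rintro x y hxy ⟨J, hJ, hyJ⟩
          exact ⟨J, hJ, (hc hJ).1.2.1 hxy hyJ⟩
        · rintro x ⟨J1, hJ1, hx⟩ y ⟨J2, hJ2, hy⟩
          rcases hchain.total hJ1 hJ2 with h | h
          · exact ⟨J2, hJ2, (hc hJ2).1.2.2 (h hx) hy⟩
          · exact ⟨J1, hJ1, (hc hJ1).1.2.2 hx (h hy)⟩
        · obtain ⟨J, hJ⟩ := hcne
          exact (hc hJ).2.1.trans (Set.subset_sUnion_of_mem hJ)
        · apply Set.eq_empty_iff_forall_notMem.2
          rintro x ⟨⟨J, hJ, hxJ⟩, hxF⟩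
          exact Set.eq_empty_iff_forall_notMem.1 (hc hJ).2.2 x ⟨hxJ, hxF⟩)
      I ⟨hI, subset_rfl, hd⟩
  obtain ⟨hMideal, hIM, hMF⟩ := hMmax.prop
  have hmax : ∀ J, (IsLatIdeal J ∧ I ⊆ J ∧ J ∩ F = ∅) → M ⊆ J → J ⊆ M :=
    fun b hb hle => hMmax.le_of_ge hb hle
  -- Step 2: maximal filter F' ⊇ F disjoint from M
  obtain ⟨G, hFG0, hGmax0⟩ := zorn_subset_nonempty
      {K : Set L | IsLatFilter K ∧ F ⊆ K ∧ M ∩ K = ∅}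
      (fun c hc hchain hcne => by
        refine ⟨⋃₀ c, ⟨⟨?_, ?_, ?_⟩, ?_, ?_⟩, fun K hK => Set.subset_sUnion_of_mem hK⟩
        · obtain ⟨K, hK⟩ := hcne
          obtain ⟨a, ha⟩ := (hc hK).1.1
          exact ⟨a, K, hK, ha⟩
        · rintro x y hxy ⟨K, hK, hxK⟩
          exact ⟨K, hK, (hc hK).1.2.1 hxy hxK⟩
        · rintro x ⟨K1, hK1, hx⟩ y ⟨K2, hK2, hy⟩
          rcases hchain.total hK1 hK2 with h | h
          · exact ⟨K2, hK2, (hc hK2).1.2.2 (h hx) hy⟩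
          · exact ⟨K1, hK1, (hc hK1).1.2.2 hx (h hy)⟩
        · obtain ⟨K, hK⟩ := hcne
          exact (hc hK).2.1.trans (Set.subset_sUnion_of_mem hK)
        · apply Set.eq_empty_iff_forall_notMem.2
          rintro x ⟨hxM, ⟨K, hK, hxK⟩⟩
          exact Set.eq_empty_iff_forall_notMem.1 (hc hK).2.2 x ⟨hxM, hxK⟩)
      F ⟨hF, subset_rfl, by rw [Set.inter_comm] at hMF ⊢; exact hMF⟩
  obtain ⟨hGfilter, hFG, hMG⟩ := hGmax0.prop
  have hGmax : ∀ K, (IsLatFilter K ∧ F ⊆ K ∧ M ∩ K = ∅) → G ⊆ K → K ⊆ G :=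
    fun b hb hle => hGmax0.le_of_ge hb hle
  refine ⟨M, G, ⟨hMideal, hGfilter, hMG, ?_, ?_⟩, hIM, hFG⟩
  · intro J hJ hMJ
    by_contra hne
    rw [Set.not_nonempty_iff_eq_empty] at hne
    have hJF : J ∩ F = ∅ := by
      apply Set.eq_empty_iff_forall_notMem.2
      rintro x ⟨hxJ, hxF⟩
      exact Set.eq_empty_iff_forall_notMem.1 hne x ⟨hxJ, hFG hxF⟩
    exact hMJ.2 (hmax J ⟨hJ, hIM.trans hMJ.1, hJF⟩ hMJ.1)
  · intro K hK hGK
    by_contra hne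
    rw [Set.not_nonempty_iff_eq_empty] at hne
    exact hGK.2 (hGmax K ⟨hK, hFG.trans hGK.1, hne⟩ hGK.1)

lemma exists_comax_sep {L : Type*} [Lattice L] {x y : L} (h : ¬ x ≤ y) :
    ∃ p : ComaxPairs L, y ∈ p.1.1 ∧ x ∉ p.1.1 ∧ x ∈ p.1.2 ∧ y ∉ p.1.2 := by
  have hI : IsLatIdeal (Set.Iic y) :=
    ⟨⟨y, le_refl y⟩, fun a b hab hb => hab.trans hb, fun a ha b hb => sup_le ha hb⟩
  have hF : IsLatFilter (Set.Ici x) :=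
    ⟨⟨x, le_refl x⟩, fun a b hab ha => ha.trans hab, fun a ha b hb => le_inf ha hb⟩
  have hd : Set.Iic y ∩ Set.Ici x = ∅ := by
    apply Set.eq_empty_iff_forall_notMem.2
    rintro z ⟨hz1, hz2⟩
    exact h (hz2.trans hz1)
  obtain ⟨I', F', hcm, hII, hFF⟩ := exists_comax_extend hI hF hd
  refine ⟨⟨(I', F'), hcm⟩, hII (le_refl y), ?_, hFF (le_refl x), ?_⟩
  · intro hx
    exact Set.eq_empty_iff_forall_notMem.1 hcm.2.2.1 x ⟨hx, hFF (le_refl x)⟩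
  · intro hy
    exact Set.eq_empty_iff_forall_notMem.1 hcm.2.2.1 y ⟨hII (le_refl y), hy⟩

/-- δ_L and ε_L are injective. -/
theorem deltaL_epsL_injective {L : Type*} [Lattice L] :
    Function.Injective (deltaL (L := L)) ∧ Function.Injective (epsL (L := L)) := by
  have key : ∀ x y : L, ¬ x ≤ y → deltaL x ≠ deltaL y ∧ epsL (L := L) x ≠ epsL y := by
    intro x y h
    obtain ⟨p, hyI, hxI, hxF, hyF⟩ := exists_comax_sep (L := L) h
    constructor
    · intro heq
      exact ((heq ▸ (hxI : p ∈ deltaL x)) : p ∈ deltaL y) hyI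
    · intro heq
      exact hyF ((heq ▸ (hxF : p ∈ epsL x)) : p ∈ epsL y)
  constructor
  · intro x y hxy
    by_contra hne
    rcases not_and_or.mp (show ¬ (x ≤ y ∧ y ≤ x) from
        fun hle => hne (le_antisymm hle.1 hle.2)) with h | h
    · exact (key x y h).1 hxy
    · exact (key y x h).1 hxy.symm
  · intro x y hxy
    by_contra hne
    rcases not_and_or.mp (show ¬ (x ≤ y ∧ y ≤ x) from
        fun hle => hne (le_antisymm hle.1 hle.2)) with h | h
    · exact (key x y h).2 hxy
    · exact (key y x h).2 hxy.symm
end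

section
/- A lattice L is distributive if and only if δ_L = ε_L, i.e. if and only if for every x ∈ L the set {(I,F) ∈ 𝔐(L) : x ∉ I} equals the set {(I,F) ∈ 𝔐(L) : x ∈ F}. -/
section ComaxAux

variable {L : Type*} [Lattice L]

private lemma cancel_of_distrib (h : IsDistrib L) {p q w : L}
    (h1 : q ≤ p ⊔ w) (h2 : q ⊓ w ≤ p) : q ≤ p := by
  have : q = q ⊓ (p ⊔ w) := (inf_eq_left.2 h1).symm
  rw [this, h q p w]
  exact sup_le inf_le_right h2

private lemma distrib_of_cancel
    (h : ∀ p q w : L, q ≤ p ⊔ w → q ⊓ w ≤ p → q ≤ p) : IsDistrib L := by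
  intro x y z
  apply le_antisymm
  · have step1 : x ⊓ (y ⊔ z) ≤ (x ⊓ y) ⊔ z := by
      refine h ((x ⊓ y) ⊔ z) (x ⊓ (y ⊔ z)) y ?_ ?_
      · calc x ⊓ (y ⊔ z) ≤ y ⊔ z := inf_le_right
          _ ≤ ((x ⊓ y) ⊔ z) ⊔ y := sup_le le_sup_right (le_sup_right.trans le_sup_left)
      · calc x ⊓ (y ⊔ z) ⊓ y ≤ x ⊓ y :=
              le_inf (inf_le_left.trans inf_le_left) inf_le_right
          _ ≤ (x ⊓ y) ⊔ z := le_sup_left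
    refine h ((x ⊓ y) ⊔ (x ⊓ z)) (x ⊓ (y ⊔ z)) z ?_ ?_
    · calc x ⊓ (y ⊔ z) ≤ (x ⊓ y) ⊔ z := step1
        _ ≤ ((x ⊓ y) ⊔ (x ⊓ z)) ⊔ z := sup_le (le_sup_left.trans le_sup_left) le_sup_right
    · calc x ⊓ (y ⊔ z) ⊓ z ≤ x ⊓ z :=
            le_inf (inf_le_left.trans inf_le_left) inf_le_right
        _ ≤ (x ⊓ y) ⊔ (x ⊓ z) := le_sup_right
  · exact sup_le (inf_le_inf_left x le_sup_left) (inf_le_inf_left x le_sup_right)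

private lemma exists_maximal_latIdeal (F₀ I₀ : Set L)
    (hI₀ : IsLatIdeal I₀) (hdisj : I₀ ∩ F₀ = ∅) :
    ∃ I, I₀ ⊆ I ∧ Maximal (fun J => IsLatIdeal J ∧ J ∩ F₀ = ∅) I := by
  have key : ∀ c ⊆ {J : Set L | IsLatIdeal J ∧ J ∩ F₀ = ∅}, IsChain (· ⊆ ·) c → c.Nonempty →
      ∃ ub ∈ {J : Set L | IsLatIdeal J ∧ J ∩ F₀ = ∅}, ∀ s ∈ c, s ⊆ ub := by
    intro c hc hchain hne
    refine ⟨⋃₀ c, ⟨⟨?_, ?_, ?_⟩, ?_⟩, fun s hs => Set.subset_sUnion_of_mem hs⟩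
    · obtain ⟨s, hs⟩ := hne
      obtain ⟨x, hx⟩ := (hc hs).1.1
      exact ⟨x, s, hs, hx⟩
    · rintro x y hxy ⟨s, hs, hy⟩
      exact ⟨s, hs, (hc hs).1.2.1 hxy hy⟩
    · rintro x ⟨s, hs, hx⟩ y ⟨t, ht, hy⟩
      rcases hchain.total hs ht with hst | hts
      · exact ⟨t, ht, (hc ht).1.2.2 (hst hx) hy⟩
      · exact ⟨s, hs, (hc hs).1.2.2 hx (hts hy)⟩
    · ext x
      simp only [Set.mem_inter_iff, Set.mem_sUnion, Set.mem_empty_iff_false, iff_false, not_and]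
      rintro ⟨s, hs, hx⟩ hxF
      have h2 := (hc hs).2
      rw [Set.eq_empty_iff_forall_notMem] at h2
      exact h2 x ⟨hx, hxF⟩
  obtain ⟨m, hm1, hm2⟩ := zorn_subset_nonempty _ key I₀ ⟨hI₀, hdisj⟩
  exact ⟨m, hm1, hm2⟩

private lemma exists_maximal_latFilter (I : Set L) (F₀ : Set L)
    (hF₀ : IsLatFilter F₀) (hdisj : I ∩ F₀ = ∅) :
    ∃ F, F₀ ⊆ F ∧ Maximal (fun K => IsLatFilter K ∧ I ∩ K = ∅) F := by
  have key : ∀ c ⊆ {K : Set L | IsLatFilter K ∧ I ∩ K = ∅}, IsChain (· ⊆ ·) c → c.Nonempty →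
      ∃ ub ∈ {K : Set L | IsLatFilter K ∧ I ∩ K = ∅}, ∀ s ∈ c, s ⊆ ub := by
    intro c hc hchain hne
    refine ⟨⋃₀ c, ⟨⟨?_, ?_, ?_⟩, ?_⟩, fun s hs => Set.subset_sUnion_of_mem hs⟩
    · obtain ⟨s, hs⟩ := hne
      obtain ⟨x, hx⟩ := (hc hs).1.1
      exact ⟨x, s, hs, hx⟩
    · rintro x y hxy ⟨s, hs, hy⟩
      exact ⟨s, hs, (hc hs).1.2.1 hxy hy⟩
    · rintro x ⟨s, hs, hx⟩ y ⟨t, ht, hy⟩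
      rcases hchain.total hs ht with hst | hts
      · exact ⟨t, ht, (hc ht).1.2.2 (hst hx) hy⟩
      · exact ⟨s, hs, (hc hs).1.2.2 hx (hts hy)⟩
    · ext x
      simp only [Set.mem_inter_iff, Set.mem_sUnion, Set.mem_empty_iff_false, iff_false, not_and]
      rintro hxI ⟨s, hs, hx⟩
      have h2 := (hc hs).2
      rw [Set.eq_empty_iff_forall_notMem] at h2
      exact h2 x ⟨hxI, hx⟩
  obtain ⟨m, hm1, hm2⟩ := zorn_subset_nonempty _ key F₀ ⟨hF₀, hdisj⟩
  exact ⟨m, hm1, hm2⟩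

end ComaxAux

/-- L is distributive iff δ_L = ε_L. -/
theorem distrib_iff_deltaL_eq_epsL {L : Type*} [Lattice L] :
    IsDistrib L ↔ ∀ x : L, deltaL x = epsL x := by
  constructor
  · -- distributive implies delta = eps
    intro hdist x
    ext P
    obtain ⟨hI, hF, hdisj, hmaxI, hmaxF⟩ := P.2
    set I := P.1.1 with hIdef
    set F := P.1.2 with hFdef
    have hdisj' : ∀ t : L, t ∈ I → t ∈ F → False := by
      intro t htI htF
      have : t ∈ I ∩ F := ⟨htI, htF⟩
      rw [hdisj] at this
      exact this
    simp only [deltaL, epsL, Set.mem_setOf_eq]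
    constructor
    · intro hxI
      by_contra hxF
      -- ideal generated by I and x
      set J : Set L := {t | ∃ i ∈ I, t ≤ i ⊔ x} with hJdef
      have hJ : IsLatIdeal J := by
        refine ⟨⟨x, ?_⟩, ?_, ?_⟩
        · obtain ⟨i, hi⟩ := hI.1
          exact ⟨i, hi, le_sup_right⟩
        · rintro a b hab ⟨i, hi, hb⟩
          exact ⟨i, hi, hab.trans hb⟩
        · rintro a ⟨i, hi, ha⟩ b ⟨i', hi', hb⟩
          refine ⟨i ⊔ i', hI.2.2 hi hi', sup_le ?_ ?_⟩
          · exact ha.trans (sup_le_sup_right le_sup_left x)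
          · exact hb.trans (sup_le_sup_right le_sup_right x)
      have hIJ : I ⊂ J := by
        constructor
        · intro i hi
          exact ⟨i, hi, le_sup_left⟩
        · intro hsub
          obtain ⟨i, hi⟩ := hI.1
          exact hxI (hsub ⟨i, hi, le_sup_right⟩)
      obtain ⟨f, hfJ, hfF⟩ := hmaxI J hJ hIJ
      obtain ⟨i, hiI, hfix⟩ := hfJ
      -- filter generated by F and x
      set K : Set L := {t | ∃ g ∈ F, g ⊓ x ≤ t} with hKdef
      have hK : IsLatFilter K := by
        refine ⟨⟨x, ?_⟩, ?_, ?_⟩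
        · obtain ⟨g, hg⟩ := hF.1
          exact ⟨g, hg, inf_le_right⟩
        · rintro a b hab ⟨g, hg, ha⟩
          exact ⟨g, hg, ha.trans hab⟩
        · rintro a ⟨g, hg, ha⟩ b ⟨g', hg', hb⟩
          refine ⟨g ⊓ g', hF.2.2 hg hg', le_inf ?_ ?_⟩
          · exact (inf_le_inf_right x inf_le_left).trans ha
          · exact (inf_le_inf_right x inf_le_right).trans hb
      have hFK : F ⊂ K := by
        constructor
        · intro g hg
          exact ⟨g, hg, inf_le_left⟩
        · intro hsub
          obtain ⟨g, hg⟩ := hF.1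
          exact hxF (hsub ⟨g, hg, inf_le_right⟩)
      obtain ⟨j, hjI, hjK⟩ := hmaxF K hK hFK
      obtain ⟨g, hgF, hgxj⟩ := hjK
      have hfgF : f ⊓ g ∈ F := hF.2.2 hfF hgF
      have hle : f ⊓ g ≤ i ⊔ j := by
        refine cancel_of_distrib hdist (w := x) ?_ ?_
        · calc f ⊓ g ≤ f := inf_le_left
            _ ≤ i ⊔ x := hfix
            _ ≤ (i ⊔ j) ⊔ x := sup_le_sup_right le_sup_left x
        · calc f ⊓ g ⊓ x ≤ g ⊓ x := inf_le_inf_right x inf_le_right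
            _ ≤ j := hgxj
            _ ≤ i ⊔ j := le_sup_right
      have : f ⊓ g ∈ I := hI.2.1 hle (hI.2.2 hiI hjI)
      exact hdisj' _ this hfgF
    · intro hxF hxI
      exact hdisj' x hxI hxF
  · -- delta = eps implies distributive
    intro h
    apply distrib_of_cancel
    intro p q w h1 h2
    by_contra hqp
    set I₀ : Set L := {t | t ≤ p} with hI₀def
    set F₀ : Set L := {t | q ≤ t} with hF₀def
    have hI₀ : IsLatIdeal I₀ := ⟨⟨p, le_refl p⟩, fun a b hab hb => hab.trans hb,
      fun a ha b hb => sup_le ha hb⟩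
    have hF₀ : IsLatFilter F₀ := ⟨⟨q, le_refl q⟩, fun a b hab ha => ha.trans hab,
      fun a ha b hb => le_inf ha hb⟩
    have hd0 : I₀ ∩ F₀ = ∅ := by
      rw [Set.eq_empty_iff_forall_notMem]
      rintro t ⟨htp, hqt⟩
      exact hqp (hqt.trans htp)
    obtain ⟨I, hI₀I, hImax⟩ := exists_maximal_latIdeal F₀ I₀ hI₀ hd0
    obtain ⟨hIideal, hIF₀⟩ := hImax.1
    have hIF₀' : ∀ t : L, t ∈ I → t ∈ F₀ → False := by
      intro t h1' h2'
      rw [Set.eq_empty_iff_forall_notMem] at hIF₀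
      exact hIF₀ t ⟨h1', h2'⟩
    obtain ⟨F, hF₀F, hFmax⟩ := exists_maximal_latFilter I F₀ hF₀ hIF₀
    obtain ⟨hFfilter, hIF⟩ := hFmax.1
    have hIF' : ∀ t : L, t ∈ I → t ∈ F → False := by
      intro t h1' h2'
      rw [Set.eq_empty_iff_forall_notMem] at hIF
      exact hIF t ⟨h1', h2'⟩
    have hcomax : IsComaximalPair I F := by
      refine ⟨hIideal, hFfilter, hIF, ?_, ?_⟩
      · intro J hJ hIJ
        by_contra hne
        rw [Set.not_nonempty_iff_eq_empty] at hne
        have hJF₀ : J ∩ F₀ = ∅ := by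
          rw [Set.eq_empty_iff_forall_notMem]
          rintro t ⟨htJ, htF₀⟩
          rw [Set.eq_empty_iff_forall_notMem] at hne
          exact hne t ⟨htJ, hF₀F htF₀⟩
        have := hImax.2 ⟨hJ, hJF₀⟩ hIJ.1
        exact hIJ.2 this
      · intro K hK hFK
        by_contra hne
        rw [Set.not_nonempty_iff_eq_empty] at hne
        have := hFmax.2 ⟨hK, hne⟩ hFK.1
        exact hFK.2 this
    set P : ComaxPairs L := ⟨(I, F), hcomax⟩ with hPdef
    have hwI : w ∉ I := by
      intro hwI
      have hpw : p ⊔ w ∈ I := hIideal.2.2 (hI₀I (le_refl p)) hwI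
      exact hIF' (p ⊔ w) hpw (hF₀F h1)
    have hwF : w ∉ F := by
      intro hwF
      have hqF : q ∈ F := hF₀F (le_refl q)
      have hqw : q ⊓ w ∈ F := hFfilter.2.2 hqF hwF
      exact hIF' (q ⊓ w) (hIideal.2.1 h2 (hI₀I (le_refl p))) hqw
    have hPd : P ∈ deltaL w := hwI
    rw [h w] at hPd
    exact hwF hPd
end

section
/- Let L be a lattice, x ∈ L, and let V be a nonempty subset of L such that δ_L(x) ⊆ ⋃_{y ∈ V} δ_L(y). Then there exists a finite nonempty subset V₁ ⊆ V such that δ_L(x) ⊆ ⋃_{y ∈ V₁} δ_L(y). -/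
-- auxiliary: extend a disjoint ideal/filter pair to a comaximal pair
theorem exists_comax_extend_s5 {L : Type*} [Lattice L] {I₀ F₀ : Set L}
    (hI : IsLatIdeal I₀) (hF : IsLatFilter F₀) (hdisj : I₀ ∩ F₀ = ∅) :
    ∃ p : ComaxPairs L, I₀ ⊆ p.1.1 ∧ F₀ ⊆ p.1.2 := by
  set S : Set (Set L × Set L) :=
    {p | IsLatIdeal p.1 ∧ IsLatFilter p.2 ∧ p.1 ∩ p.2 = ∅} with hS
  have hchains : ∀ c ⊆ S, IsChain (· ≤ ·) c → ∀ y ∈ c,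
      ∃ ub ∈ S, ∀ z ∈ c, z ≤ ub := by
    rintro c hcS hchain y hyc
    refine ⟨(⋃ p ∈ c, p.1, ⋃ p ∈ c, p.2), ⟨?_, ?_, ?_⟩, ?_⟩
    · refine ⟨⟨(hcS hyc).1.1.choose, Set.mem_biUnion hyc (hcS hyc).1.1.choose_spec⟩, ?_, ?_⟩
      · rintro a b hab hb
        obtain ⟨p, hp, hbp⟩ := Set.mem_iUnion₂.1 hb
        exact Set.mem_biUnion hp ((hcS hp).1.2.1 hab hbp)
      · rintro a ha b hb
        obtain ⟨p, hp, hap⟩ := Set.mem_iUnion₂.1 ha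
        obtain ⟨q, hq, hbq⟩ := Set.mem_iUnion₂.1 hb
        rcases hchain.total hp hq with hpq | hqp
        · exact Set.mem_biUnion hq ((hcS hq).1.2.2 (hpq.1 hap) hbq)
        · exact Set.mem_biUnion hp ((hcS hp).1.2.2 hap (hqp.1 hbq))
    · refine ⟨⟨(hcS hyc).2.1.1.choose, Set.mem_biUnion hyc (hcS hyc).2.1.1.choose_spec⟩, ?_, ?_⟩
      · rintro a b hab ha
        obtain ⟨p, hp, hap⟩ := Set.mem_iUnion₂.1 ha
        exact Set.mem_biUnion hp ((hcS hp).2.1.2.1 hab hap)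
      · rintro a ha b hb
        obtain ⟨p, hp, hap⟩ := Set.mem_iUnion₂.1 ha
        obtain ⟨q, hq, hbq⟩ := Set.mem_iUnion₂.1 hb
        rcases hchain.total hp hq with hpq | hqp
        · exact Set.mem_biUnion hq ((hcS hq).2.1.2.2 (hpq.2 hap) hbq)
        · exact Set.mem_biUnion hp ((hcS hp).2.1.2.2 hap (hqp.2 hbq))
    · rw [Set.eq_empty_iff_forall_notMem]
      rintro a ⟨ha1, ha2⟩
      obtain ⟨p, hp, hap⟩ := Set.mem_iUnion₂.1 ha1
      obtain ⟨q, hq, haq⟩ := Set.mem_iUnion₂.1 ha2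
      rcases hchain.total hp hq with hpq | hqp
      · exact Set.eq_empty_iff_forall_notMem.1 (hcS hq).2.2 a ⟨hpq.1 hap, haq⟩
      · exact Set.eq_empty_iff_forall_notMem.1 (hcS hp).2.2 a ⟨hap, hqp.2 haq⟩
    · intro p hp
      exact ⟨Set.subset_biUnion_of_mem (u := fun p : Set L × Set L => p.1) hp,
             Set.subset_biUnion_of_mem (u := fun p : Set L × Set L => p.2) hp⟩
  obtain ⟨m, hm0, hmS, hmax⟩ := zorn_le_nonempty₀ S hchains (I₀, F₀) ⟨hI, hF, hdisj⟩
  · obtain ⟨hmI, hmF, hmd⟩ := hmS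
    refine ⟨⟨m, hmI, hmF, hmd, ?_, ?_⟩, hm0.1, hm0.2⟩
    · intro J hJ hIJ
      by_contra hne
      rw [Set.not_nonempty_iff_eq_empty] at hne
      have hle : m ≤ (J, m.2) := ⟨hIJ.1, le_rfl⟩
      have := hmax (y := (J, m.2)) ⟨hJ, hmF, hne⟩ hle
      exact hIJ.2 this.1
    · intro K hK hFK
      by_contra hne
      rw [Set.not_nonempty_iff_eq_empty] at hne
      have hle : m ≤ (m.1, K) := ⟨le_rfl, hFK.1⟩
      have := hmax (y := (m.1, K)) ⟨hmI, hK, hne⟩ hle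
      exact hFK.2 this.2

/-- every cover of δ_L(x) by sets δ_L(y), y ∈ V, reduces to a finite
nonempty subcover. -/
theorem deltaL_compactness {L : Type*} [Lattice L] (x : L) (V : Set L)
    (hV : V.Nonempty) (h : deltaL x ⊆ ⋃ y ∈ V, deltaL y) :
    ∃ V₁ : Set L, V₁ ⊆ V ∧ V₁.Finite ∧ V₁.Nonempty ∧
      deltaL x ⊆ ⋃ y ∈ V₁, deltaL y := by
  classical
  by_cases hx : ∃ s : Finset L, ∃ hs : s.Nonempty, ↑s ⊆ V ∧ x ≤ s.sup' hs id
  · obtain ⟨s, hs, hsV, hxs⟩ := hx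
    refine ⟨↑s, hsV, s.finite_toSet, hs.to_set, ?_⟩
    intro p hp
    by_contra hcon
    simp only [Set.mem_iUnion, deltaL, Set.mem_setOf_eq, not_exists, not_not] at hcon
    have hsupmem : s.sup' hs id ∈ p.1.1 :=
      Finset.sup'_mem p.1.1 (fun a ha b hb => p.2.1.2.2 ha hb) s hs id
        (fun i hi => hcon i hi)
    exact hp (p.2.1.2.1 hxs hsupmem)
  · exfalso
    -- ideal generated by V
    set I₀ : Set L := {z | ∃ s : Finset L, ∃ hs : s.Nonempty, ↑s ⊆ V ∧ z ≤ s.sup' hs id}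
      with hI₀
    have hI₀ideal : IsLatIdeal I₀ := by
      refine ⟨⟨hV.choose, {hV.choose}, Finset.singleton_nonempty _, by
        simp [hV.choose_spec], by simp⟩, ?_, ?_⟩
      · rintro a b hab ⟨s, hs, hsV, hbs⟩
        exact ⟨s, hs, hsV, hab.trans hbs⟩
      · rintro a ⟨s, hs, hsV, has⟩ b ⟨t, ht, htV, hbt⟩
        refine ⟨s ∪ t, hs.mono Finset.subset_union_left, ?_, ?_⟩
        · rw [Finset.coe_union]; exact Set.union_subset hsV htV
        · exact sup_le (has.trans (Finset.sup'_mono id Finset.subset_union_left hs))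
            (hbt.trans (Finset.sup'_mono id Finset.subset_union_right ht))
    have hxI₀ : x ∉ I₀ := hx
    have hdisj : I₀ ∩ Set.Ici x = ∅ := by
      rw [Set.eq_empty_iff_forall_notMem]
      rintro a ⟨ha1, ha2⟩
      exact hxI₀ (hI₀ideal.2.1 ha2 ha1)
    obtain ⟨p, hpI, hpF⟩ := exists_comax_extend_s5 hI₀ideal
      ⟨⟨x, le_rfl⟩, fun a b hab ha => hab.trans' ha, fun a ha b hb => le_inf ha hb⟩ hdisj
    have hxp : p ∈ deltaL x := by
      intro hmem
      have : x ∈ p.1.1 ∩ p.1.2 := ⟨hmem, hpF le_rfl⟩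
      rw [p.2.2.2.1] at this
      exact this
    obtain ⟨y, hyV, hyp⟩ := Set.mem_iUnion₂.1 (h hxp)
    exact hyp (hpI ⟨{y}, Finset.singleton_nonempty _, by simp [hyV], by simp⟩)
end

section
/- (Generalized Balbes–Dwinger property) Let L be a lattice and let V and W be nonempty subsets of L such that ⋂_{x ∈ V} ε_L(x) ⊆ ⋃_{y ∈ W} δ_L(y). Then there exist finite nonempty subsets V₁ ⊆ V and W₁ ⊆ W such that ⋂_{x ∈ V₁} ε_L(x) ⊆ ⋃_{y ∈ W₁} δ_L(y). -/
/-- Extension of a disjoint ideal/filter pair to a comaximal pair, via Zorn. -/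
lemma exists_comax_ext {L : Type*} [Lattice L] (I₀ F₀ : Set L)
    (hI : IsLatIdeal I₀) (hF : IsLatFilter F₀) (hd : I₀ ∩ F₀ = ∅) :
    ∃ I F : Set L, IsComaximalPair I F ∧ I₀ ⊆ I ∧ F₀ ⊆ F := by
  classical
  set s : Set (Set L × Set L) :=
    {p | IsLatIdeal p.1 ∧ IsLatFilter p.2 ∧ p.1 ∩ p.2 = ∅ ∧ I₀ ⊆ p.1 ∧ F₀ ⊆ p.2}
  have hchain : ∀ c ⊆ s, IsChain (· ≤ ·) c → ∀ y ∈ c, ∃ ub ∈ s, ∀ z ∈ c, z ≤ ub := by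
    intro c hcs hc y hy
    refine ⟨(⋃ p ∈ c, p.1, ⋃ p ∈ c, p.2), ?_, ?_⟩
    · have hy' := hcs hy
      constructor
      · refine ⟨⟨(hcs hy).1.1.choose, Set.mem_biUnion hy (hcs hy).1.1.choose_spec⟩, ?_, ?_⟩
        · rintro x z hxz hz
          simp only [Set.mem_iUnion] at hz ⊢
          obtain ⟨p, hp, hzp⟩ := hz
          exact ⟨p, hp, (hcs hp).1.2.1 hxz hzp⟩
        · rintro x hx z hz
          simp only [Set.mem_iUnion] at hx hz ⊢
          obtain ⟨p, hp, hxp⟩ := hx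
          obtain ⟨q, hq, hzq⟩ := hz
          rcases hc.total hp hq with hle | hle
          · exact ⟨q, hq, (hcs hq).1.2.2 (hle.1 hxp) hzq⟩
          · exact ⟨p, hp, (hcs hp).1.2.2 hxp (hle.1 hzq)⟩
      refine ⟨?_, ?_, ?_, ?_⟩
      · refine ⟨⟨(hcs hy).2.1.1.choose, Set.mem_biUnion hy (hcs hy).2.1.1.choose_spec⟩, ?_, ?_⟩
        · rintro x z hxz hx
          simp only [Set.mem_iUnion] at hx ⊢
          obtain ⟨p, hp, hxp⟩ := hx
          exact ⟨p, hp, (hcs hp).2.1.2.1 hxz hxp⟩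
        · rintro x hx z hz
          simp only [Set.mem_iUnion] at hx hz ⊢
          obtain ⟨p, hp, hxp⟩ := hx
          obtain ⟨q, hq, hzq⟩ := hz
          rcases hc.total hp hq with hle | hle
          · exact ⟨q, hq, (hcs hq).2.1.2.2 (hle.2 hxp) hzq⟩
          · exact ⟨p, hp, (hcs hp).2.1.2.2 hxp (hle.2 hzq)⟩
      · ext z
        simp only [Set.mem_inter_iff, Set.mem_iUnion, Set.mem_empty_iff_false, iff_false,
          not_and]
        rintro ⟨p, hp, hzp⟩ ⟨q, hq, hzq⟩
        rcases hc.total hp hq with hle | hle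
        · have : z ∈ q.1 ∩ q.2 := ⟨hle.1 hzp, hzq⟩
          rw [(hcs hq).2.2.1] at this; exact this
        · have : z ∈ p.1 ∩ p.2 := ⟨hzp, hle.2 hzq⟩
          rw [(hcs hp).2.2.1] at this; exact this
      · exact (hcs hy).2.2.2.1.trans (Set.subset_biUnion_of_mem hy)
      · exact (hcs hy).2.2.2.2.trans (Set.subset_biUnion_of_mem hy)
    · intro z hz
      exact ⟨Set.subset_biUnion_of_mem hz, Set.subset_biUnion_of_mem hz⟩
  obtain ⟨m, hm0, hmax⟩ := zorn_le_nonempty₀ s hchain (I₀, F₀)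
    ⟨hI, hF, hd, subset_rfl, subset_rfl⟩
  · obtain ⟨hmI, hmF, hmd, hmI0, hmF0⟩ := hmax.1
    refine ⟨m.1, m.2, ⟨hmI, hmF, hmd, ?_, ?_⟩, hm0.1.trans_eq rfl |>.trans subset_rfl |>.trans subset_rfl, hm0.2⟩
    · intro J hJ hIJ
      by_contra hne
      rw [Set.not_nonempty_iff_eq_empty] at hne
      have hJs : (J, m.2) ∈ s := ⟨hJ, hmF, hne, hmI0.trans hIJ.1, hmF0⟩
      have := hmax.2 hJs ⟨hIJ.1, subset_rfl⟩
      exact hIJ.2 this.1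
    · intro K hK hFK
      by_contra hne
      rw [Set.not_nonempty_iff_eq_empty] at hne
      have hd' : m.1 ∩ K = ∅ := hne
      have hKs : (m.1, K) ∈ s := ⟨hmI, hK, hd', hmI0, hmF0.trans hFK.1⟩
      have := hmax.2 hKs ⟨subset_rfl, hFK.1⟩
      exact hFK.2 this.2

/-- Generalized Balbes–Dwinger property. -/
theorem generalized_balbes_dwinger {L : Type*} [Lattice L] (V W : Set L)
    (hV : V.Nonempty) (hW : W.Nonempty)
    (h : ⋂ x ∈ V, epsL x ⊆ ⋃ y ∈ W, deltaL y) :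
    ∃ V₁ W₁ : Set L, V₁ ⊆ V ∧ W₁ ⊆ W ∧ V₁.Finite ∧ W₁.Finite ∧
      V₁.Nonempty ∧ W₁.Nonempty ∧ ⋂ x ∈ V₁, epsL x ⊆ ⋃ y ∈ W₁, deltaL y := by
  classical
  -- ideal generated by W, filter generated by V
  set I₀ : Set L := {z | ∃ T : Finset L, ↑T ⊆ W ∧ ∃ hT : T.Nonempty, z ≤ T.sup' hT id}
  set F₀ : Set L := {z | ∃ S : Finset L, ↑S ⊆ V ∧ ∃ hS : S.Nonempty, S.inf' hS id ≤ z}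
  obtain ⟨w, hw⟩ := hW
  obtain ⟨v, hv⟩ := hV
  have hI₀ : IsLatIdeal I₀ := by
    refine ⟨⟨w, {w}, by simpa using hw, Finset.singleton_nonempty w, by simp⟩, ?_, ?_⟩
    · rintro x z hxz ⟨T, hTW, hT, hle⟩
      exact ⟨T, hTW, hT, hxz.trans hle⟩
    · rintro x ⟨T₁, h₁, hT₁, hle₁⟩ z ⟨T₂, h₂, hT₂, hle₂⟩
      refine ⟨T₁ ∪ T₂, by simp [Set.union_subset_iff, h₁, h₂], hT₁.mono Finset.subset_union_left, ?_⟩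
      rw [Finset.sup'_union hT₁ hT₂]
      exact sup_le_sup hle₁ hle₂
  have hF₀ : IsLatFilter F₀ := by
    refine ⟨⟨v, {v}, by simpa using hv, Finset.singleton_nonempty v, by simp⟩, ?_, ?_⟩
    · rintro x z hxz ⟨S, hSV, hS, hle⟩
      exact ⟨S, hSV, hS, hle.trans hxz⟩
    · rintro x ⟨S₁, h₁, hS₁, hle₁⟩ z ⟨S₂, h₂, hS₂, hle₂⟩
      refine ⟨S₁ ∪ S₂, by simp [Set.union_subset_iff, h₁, h₂], hS₁.mono Finset.subset_union_left, ?_⟩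
      rw [Finset.inf'_union hS₁ hS₂]
      exact inf_le_inf hle₁ hle₂
  by_cases hint : (I₀ ∩ F₀).Nonempty
  · obtain ⟨z, ⟨T, hTW, hT, hzT⟩, ⟨S, hSV, hS, hSz⟩⟩ := hint
    refine ⟨↑S, ↑T, hSV, hTW, S.finite_toSet, T.finite_toSet, by simpa using hS,
      by simpa using hT, ?_⟩
    intro p hp
    simp only [Set.mem_iInter, Finset.mem_coe] at hp
    -- inf' S ∈ F_p
    have hfp : S.inf' hS id ∈ p.1.2 :=
      Finset.inf'_mem p.1.2 (fun a ha b hb => p.2.2.1.2.2 ha hb) S hS id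
        (fun i hi => hp i hi)
    have hzF : z ∈ p.1.2 := p.2.2.1.2.1 hSz hfp
    by_contra hnot
    simp only [Set.mem_iUnion, deltaL, Set.mem_setOf_eq, not_exists, not_not,
      Finset.mem_coe] at hnot
    have hsupI : T.sup' hT id ∈ p.1.1 :=
      Finset.sup'_mem p.1.1 (fun a ha b hb => p.2.1.2.2 ha hb) T hT id
        (fun i hi => hnot i hi)
    have hzI : z ∈ p.1.1 := p.2.1.2.1 hzT hsupI
    have : z ∈ p.1.1 ∩ p.1.2 := ⟨hzI, hzF⟩
    rw [p.2.2.2.1] at this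
    exact this
  · exfalso
    rw [Set.not_nonempty_iff_eq_empty] at hint
    obtain ⟨I, F, hcom, hI0, hF0⟩ := exists_comax_ext I₀ F₀ hI₀ hF₀ hint
    set p : ComaxPairs L := ⟨(I, F), hcom⟩
    have hpmem : p ∈ ⋂ x ∈ V, epsL x := by
      simp only [Set.mem_iInter]
      intro x hx
      exact hF0 ⟨{x}, by simpa using hx, Finset.singleton_nonempty x, by simp⟩
    have := h hpmem
    simp only [Set.mem_iUnion, deltaL, Set.mem_setOf_eq] at this
    obtain ⟨y, hy, hyp⟩ := this
    exact hyp (hI0 ⟨{y}, by simpa using hy, Finset.singleton_nonempty y, by simp⟩)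
end

section
/- Let L be a lattice and let (I,F) and (J,G) be comaximal pairs of L. Then (I,F) belongs to the closure of the singleton {(J,G)} in the topology τ_L if and only if J ⊆ I. -/
/-- (I,F) is in the τ_L-closure of {(J,G)} iff J ⊆ I. -/
theorem mem_tau_closure_iff {L : Type*} [Lattice L] (p q : ComaxPairs L) :
    p ∈ @closure (ComaxPairs L) (tauL L) {q} ↔ q.1.1 ⊆ p.1.1 := by
  letI := tauL L
  rw [mem_closure_iff]
  constructor
  · intro h x hxJ
    by_contra hxI
    obtain ⟨r, hr1, hr2⟩ := h (deltaL x)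
      (TopologicalSpace.GenerateOpen.basic _ ⟨x, rfl⟩) hxI
    rw [Set.mem_singleton_iff] at hr2
    subst hr2
    exact hr1 hxJ
  · intro hJI U hU hpU
    refine ⟨q, ?_, rfl⟩
    induction hU with
    | basic s hs =>
      obtain ⟨x, rfl⟩ := hs
      exact fun hxJ => hpU (hJI hxJ)
    | univ => trivial
    | inter s t hs ht ihs iht => exact ⟨ihs hpU.1, iht hpU.2⟩
    | sUnion S hS ih =>
      obtain ⟨s, hs, hps⟩ := hpU
      exact ⟨s, hs, ih s hs hps⟩
end

section
/- Let L be a lattice and let (I,F) and (J,G) be comaximal pairs of L. Then (I,F) belongs to the closure of the singleton {(J,G)} in the topology σ_L if and only if F ⊆ G. -/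
/-- (I,F) is in the σ_L-closure of {(J,G)} iff F ⊆ G. -/
theorem mem_sigma_closure_iff {L : Type*} [Lattice L] (p q : ComaxPairs L) :
    p ∈ @closure (ComaxPairs L) (sigmaL L) {q} ↔ p.1.2 ⊆ q.1.2 := by
  letI := sigmaL L
  rw [mem_closure_iff]
  constructor
  · intro h x hx
    have hopen : IsOpen (epsL x) :=
      TopologicalSpace.isOpen_generateFrom_of_mem ⟨x, rfl⟩
    obtain ⟨r, hr, hrq⟩ := h (epsL x) hopen hx
    rcases hrq with rfl
    exact hr
  · intro hsub U hU hpU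
    refine ⟨q, ?_, rfl⟩
    have hU' : TopologicalSpace.GenerateOpen (Set.range (epsL (L := L))) U := hU
    clear hU
    induction hU' with
    | basic s hs =>
      obtain ⟨x, rfl⟩ := hs
      exact hsub hpU
    | univ => trivial
    | inter s t _ _ ihs iht => exact ⟨ihs hpU.1, iht hpU.2⟩
    | sUnion S _ ih =>
      obtain ⟨s, hsS, hps⟩ := hpU
      exact ⟨s, hsS, ih s hsS hps⟩
end

section
/- Let L be a lattice. The bitopological space (𝔐(L), τ_L, σ_L) is pairwise T₀: for all distinct comaximal pairs p, q ∈ 𝔐(L), either there exists a τ_L-open set U with p ∈ U and q ∉ U, or there exists a σ_L-open set V with q ∈ V and p ∉ V. -/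
/-- (𝔐(L), τ_L, σ_L) is pairwise T₀. -/
theorem specB_pairwise_T0 {L : Type*} [Lattice L] (p q : ComaxPairs L) (hpq : p ≠ q) :
    (∃ U : Set (ComaxPairs L), @IsOpen (ComaxPairs L) (tauL L) U ∧ p ∈ U ∧ q ∉ U) ∨
      (∃ V : Set (ComaxPairs L), @IsOpen (ComaxPairs L) (sigmaL L) V ∧ q ∈ V ∧ p ∉ V) := by
  by_contra h
  push_neg at h
  obtain ⟨h1, h2⟩ := h
  have hIsub : q.1.1 ⊆ p.1.1 := by
    intro x hx
    by_contra hxp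
    exact (h1 (deltaL x) (TopologicalSpace.GenerateOpen.basic _ ⟨x, rfl⟩) hxp) hx
  have hFsub : q.1.2 ⊆ p.1.2 := fun x hx =>
    h2 (epsL x) (TopologicalSpace.GenerateOpen.basic _ ⟨x, rfl⟩) hx
  obtain ⟨hIp, hFp, hdisjp, hmaxIp, hmaxFp⟩ := p.2
  obtain ⟨hIq, hFq, hdisjq, hmaxIq, hmaxFq⟩ := q.2
  have hIeq : q.1.1 = p.1.1 := by
    by_contra hne
    obtain ⟨x, hxI, hxF⟩ := hmaxIq p.1.1 hIp ⟨hIsub, fun hsub => hne (le_antisymm hIsub hsub)⟩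
    have : x ∈ p.1.1 ∩ p.1.2 := ⟨hxI, hFsub hxF⟩
    simp [hdisjp] at this
  have hFeq : q.1.2 = p.1.2 := by
    by_contra hne
    obtain ⟨x, hxI, hxF⟩ := hmaxFq p.1.2 hFp ⟨hFsub, fun hsub => hne (le_antisymm hFsub hsub)⟩
    have : x ∈ p.1.1 ∩ p.1.2 := ⟨hIsub hxI, hxF⟩
    simp [hdisjp] at this
  exact hpq (Subtype.ext (Prod.ext hIeq hFeq)).symm
end

section
/- A lattice L is distributive if and only if every point of (𝔐(L), τ_L, σ_L) is prime, i.e. if and only if for every comaximal pair p ∈ 𝔐(L), the closure of the singleton {p} in the topology τ_L equals the closure of {p} in the topology σ_L. -/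
section MyAux

variable {L : Type*} [Lattice L]


lemma exists_comax {I₀ F₀ : Set L} (hI : IsLatIdeal I₀) (hF : IsLatFilter F₀)
    (hd : I₀ ∩ F₀ = ∅) : ∃ I F : Set L, IsComaximalPair I F ∧ I₀ ⊆ I ∧ F₀ ⊆ F := by
  -- step 1: maximal ideal containing I₀ disjoint from F₀
  obtain ⟨I, hI0I, hImax⟩ := zorn_subset_nonempty
      {I : Set L | IsLatIdeal I ∧ I ∩ F₀ = ∅}
      (fun c hc hchain hcne => by
        refine ⟨⋃₀ c, ⟨⟨?_, ?_, ?_⟩, ?_⟩, fun s hs => Set.subset_sUnion_of_mem hs⟩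
        · obtain ⟨s, hs⟩ := hcne
          obtain ⟨a, ha⟩ := (hc hs).1.1
          exact ⟨a, s, hs, ha⟩
        · rintro x y hxy ⟨s, hs, hys⟩
          exact ⟨s, hs, (hc hs).1.2.1 hxy hys⟩
        · rintro x ⟨s, hs, hxs⟩ y ⟨t, ht, hyt⟩
          rcases hchain.total hs ht with h | h
          · exact ⟨t, ht, (hc ht).1.2.2 (h hxs) hyt⟩
          · exact ⟨s, hs, (hc hs).1.2.2 hxs (h hyt)⟩
        · ext w
          simp only [Set.mem_inter_iff, Set.mem_sUnion, Set.mem_empty_iff_false, iff_false]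
          rintro ⟨⟨s, hs, hws⟩, hwF⟩
          have := (hc hs).2
          rw [Set.eq_empty_iff_forall_notMem] at this
          exact this w ⟨hws, hwF⟩ )
      I₀ ⟨hI, hd⟩
  obtain ⟨hIideal, hIdisj⟩ := hImax.1
  -- step 2: maximal filter containing F₀ disjoint from I
  have hF0 : F₀ ∈ {F : Set L | IsLatFilter F ∧ I ∩ F = ∅} := by
    refine ⟨hF, ?_⟩
    rw [Set.eq_empty_iff_forall_notMem]
    rintro w ⟨hwI, hwF⟩
    rw [Set.eq_empty_iff_forall_notMem] at hIdisj
    exact hIdisj w ⟨hwI, hwF⟩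
  obtain ⟨F, hF0F, hFmax⟩ := zorn_subset_nonempty
      {F : Set L | IsLatFilter F ∧ I ∩ F = ∅}
      (fun c hc hchain hcne => by
        refine ⟨⋃₀ c, ⟨⟨?_, ?_, ?_⟩, ?_⟩, fun s hs => Set.subset_sUnion_of_mem hs⟩
        · obtain ⟨s, hs⟩ := hcne
          obtain ⟨a, ha⟩ := (hc hs).1.1
          exact ⟨a, s, hs, ha⟩
        · rintro x y hxy ⟨s, hs, hxs⟩
          exact ⟨s, hs, (hc hs).1.2.1 hxy hxs⟩
        · rintro x ⟨s, hs, hxs⟩ y ⟨t, ht, hyt⟩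
          rcases hchain.total hs ht with h | h
          · exact ⟨t, ht, (hc ht).1.2.2 (h hxs) hyt⟩
          · exact ⟨s, hs, (hc hs).1.2.2 hxs (h hyt)⟩
        · ext w
          simp only [Set.mem_inter_iff, Set.mem_sUnion, Set.mem_empty_iff_false, iff_false]
          rintro ⟨hwI, ⟨s, hs, hws⟩⟩
          have := (hc hs).2
          rw [Set.eq_empty_iff_forall_notMem] at this
          exact this w ⟨hwI, hws⟩ )
      F₀ hF0
  obtain ⟨hFfilter, hFdisj⟩ := hFmax.1
  refine ⟨I, F, ⟨hIideal, hFfilter, hFdisj, ?_, ?_⟩, hI0I, hF0F⟩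
  · intro J hJ hIJ
    by_contra hJF
    rw [Set.not_nonempty_iff_eq_empty] at hJF
    have hJF0 : J ∩ F₀ = ∅ := by
      rw [Set.eq_empty_iff_forall_notMem] at hJF ⊢
      intro w hw
      exact hJF w ⟨hw.1, hF0F hw.2⟩
    exact hIJ.2 (hImax.2 ⟨hJ, hJF0⟩ hIJ.1)
  · intro K hK hFK
    by_contra hIK
    rw [Set.not_nonempty_iff_eq_empty] at hIK
    exact hFK.2 (hFmax.2 ⟨hK, hIK⟩ hFK.1)



variable {L : Type*} [Lattice L]

lemma genOpen_mem {α : Type*} {S : Set (Set α)} {p q : α} (h : ∀ s ∈ S, q ∈ s → p ∈ s) :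
    ∀ o : Set α, TopologicalSpace.GenerateOpen S o → q ∈ o → p ∈ o := by
  intro o ho
  induction ho with
  | basic s hs => exact h s hs
  | univ => exact fun _ => trivial
  | inter s t _ _ ihs iht => exact fun hq => ⟨ihs hq.1, iht hq.2⟩
  | sUnion T _ ih => rintro ⟨s, hs, hqs⟩; exact ⟨s, hs, ih s hs hqs⟩

lemma mem_closure_gen {α : Type*} {S : Set (Set α)} {p q : α} :
    q ∈ @closure α (TopologicalSpace.generateFrom S) {p} ↔ ∀ s ∈ S, q ∈ s → p ∈ s := by
  letI := TopologicalSpace.generateFrom S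
  rw [mem_closure_iff]
  constructor
  · intro h s hs hq
    rcases h s (TopologicalSpace.isOpen_generateFrom_of_mem hs) hq with ⟨x, hx, hxp⟩
    rw [Set.mem_singleton_iff] at hxp
    exact hxp ▸ hx
  · intro h o ho hq
    exact ⟨p, genOpen_mem h o ho hq, rfl⟩

lemma mem_closure_tau (p q : ComaxPairs L) :
    q ∈ @closure _ (tauL L) {p} ↔ p.1.1 ⊆ q.1.1 := by
  rw [tauL, mem_closure_gen]
  constructor
  · intro h x hx
    by_contra hx'
    exact (h (deltaL x) ⟨x, rfl⟩ hx') hx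
  · rintro h s ⟨x, rfl⟩ hq hp
    exact hq (h hp)

lemma mem_closure_sigma (p q : ComaxPairs L) :
    q ∈ @closure _ (sigmaL L) {p} ↔ q.1.2 ⊆ p.1.2 := by
  rw [sigmaL, mem_closure_gen]
  constructor
  · intro h x hx
    exact h (epsL x) ⟨x, rfl⟩ hx
  · rintro h s ⟨x, rfl⟩ hq
    exact h hq

lemma comax_compl (hd : IsDistrib L) {I F : Set L} (h : IsComaximalPair I F) : F = Iᶜ := by
  obtain ⟨hI, hF, hdis, hmaxI, hmaxF⟩ := h
  rw [Set.eq_empty_iff_forall_notMem] at hdis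
  ext x
  simp only [Set.mem_compl_iff]
  constructor
  · intro hxF hxI
    exact hdis x ⟨hxI, hxF⟩
  · intro hxI
    by_contra hxF
    -- ideal generated by I and x meets F
    obtain ⟨i0, hi0⟩ := hI.1
    have hJ : IsLatIdeal {w : L | ∃ i ∈ I, w ≤ i ⊔ x} := by
      refine ⟨⟨x, i0, hi0, le_sup_right⟩, ?_, ?_⟩
      · rintro u v huv ⟨i, hi, hvi⟩
        exact ⟨i, hi, huv.trans hvi⟩
      · rintro u ⟨i, hi, hui⟩ v ⟨j, hj, hvj⟩
        exact ⟨i ⊔ j, hI.2.2 hi hj,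
          sup_le (hui.trans (sup_le (le_sup_left.trans le_sup_left) le_sup_right))
                 (hvj.trans (sup_le (le_sup_right.trans le_sup_left) le_sup_right))⟩
    have hIJ : I ⊂ {w : L | ∃ i ∈ I, w ≤ i ⊔ x} := by
      constructor
      · intro i hi; exact ⟨i, hi, le_sup_left⟩
      · intro hsub
        exact hxI (hsub ⟨i0, hi0, le_sup_right⟩)
    obtain ⟨w, ⟨i, hi, hwi⟩, hwF⟩ := hmaxI _ hJ hIJ
    have hixF : i ⊔ x ∈ F := hF.2.1 hwi hwF
    -- filter generated by F and x meets I
    obtain ⟨f0, hf0⟩ := hF.1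
    have hK : IsLatFilter {w : L | ∃ f ∈ F, f ⊓ x ≤ w} := by
      refine ⟨⟨x, f0, hf0, inf_le_right⟩, ?_, ?_⟩
      · rintro u v huv ⟨f, hf, hfu⟩
        exact ⟨f, hf, hfu.trans huv⟩
      · rintro u ⟨f, hf, hfu⟩ v ⟨g, hg, hgv⟩
        exact ⟨f ⊓ g, hF.2.2 hf hg,
          le_inf (le_trans (inf_le_inf_right x inf_le_left) hfu)
                 (le_trans (inf_le_inf_right x inf_le_right) hgv)⟩
    have hFK : F ⊂ {w : L | ∃ f ∈ F, f ⊓ x ≤ w} := by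
      constructor
      · intro f hf; exact ⟨f, hf, inf_le_left⟩
      · intro hsub
        exact hxF (hsub ⟨f0, hf0, inf_le_right⟩)
    obtain ⟨v, hvI, f, hf, hfv⟩ := hmaxF _ hK hFK
    have hfxI : f ⊓ x ∈ I := hI.2.1 hfv hvI
    -- the element f ⊓ (i ⊔ x) is in both I and F
    have hm1 : f ⊓ (i ⊔ x) ∈ F := hF.2.2 hf hixF
    have hm2 : f ⊓ (i ⊔ x) ∈ I := by
      rw [hd f i x]
      exact hI.2.2 (hI.2.1 inf_le_right hi) hfxI
    exact hdis _ ⟨hm2, hm1⟩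




end MyAux

/-- L is distributive iff every point of (𝔐(L), τ_L, σ_L) is prime. -/
theorem distrib_iff_every_point_prime {L : Type*} [Lattice L] :
    IsDistrib L ↔
      ∀ p : ComaxPairs L,
        @closure (ComaxPairs L) (tauL L) {p} =
          @closure (ComaxPairs L) (sigmaL L) {p} := by
  constructor
  · intro hd p
    ext q
    rw [mem_closure_tau, mem_closure_sigma, comax_compl hd p.2, comax_compl hd q.2,
      Set.compl_subset_compl]
  · intro h a b c
    refine le_antisymm ?_ (sup_le (le_inf inf_le_left (inf_le_right.trans le_sup_left))
      (le_inf inf_le_left (inf_le_right.trans le_sup_right)))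
    by_contra hne
    set d := a ⊓ b ⊔ a ⊓ c with hdd
    set e := a ⊓ (b ⊔ c) with hee
    have hId : IsLatIdeal {w : L | w ≤ d} :=
      ⟨⟨d, le_refl d⟩, fun x y hxy hy => hxy.trans hy, fun x hx y hy => sup_le hx hy⟩
    have hFe : IsLatFilter {w : L | e ≤ w} :=
      ⟨⟨e, le_refl e⟩, fun x y hxy hx => hx.trans hxy, fun x hx y hy => le_inf hx hy⟩
    have hdis : {w : L | w ≤ d} ∩ {w : L | e ≤ w} = ∅ := by
      rw [Set.eq_empty_iff_forall_notMem]
      rintro w ⟨hw1, hw2⟩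
      exact hne (hw2.trans hw1)
    obtain ⟨I, F, hco, hdI, heF⟩ := exists_comax hId hFe hdis
    have hdI' : d ∈ I := hdI (le_refl d)
    have heF' : e ∈ F := heF (le_refl e)
    have hdisIF := hco.2.2.1
    rw [Set.eq_empty_iff_forall_notMem] at hdisIF
    have haF : a ∈ F := hco.2.1.2.1 inf_le_left heF'
    have hbcF : b ⊔ c ∈ F := hco.2.1.2.1 inf_le_right heF'
    have hbF : b ∉ F := fun hb =>
      hdisIF (a ⊓ b) ⟨hco.1.2.1 le_sup_left hdI', hco.2.1.2.2 haF hb⟩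
    have hcF : c ∉ F := fun hc =>
      hdisIF (a ⊓ c) ⟨hco.1.2.1 le_sup_right hdI', hco.2.1.2.2 haF hc⟩
    -- some z ∈ {b, c} is in neither I nor F
    have hz : ∃ z : L, z ∉ I ∧ z ∉ F := by
      by_cases hbI : b ∈ I
      · by_cases hcI : c ∈ I
        · exact absurd ⟨hco.1.2.2 hbI hcI, hbcF⟩ (hdisIF (b ⊔ c))
        · exact ⟨c, hcI, hcF⟩
      · exact ⟨b, hbI, hbF⟩
    obtain ⟨z, hzI, hzF⟩ := hz
    -- build q extending (I, ↑z)
    have hFz : IsLatFilter {w : L | z ≤ w} :=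
      ⟨⟨z, le_refl z⟩, fun x y hxy hx => hx.trans hxy, fun x hx y hy => le_inf hx hy⟩
    have hdis2 : I ∩ {w : L | z ≤ w} = ∅ := by
      rw [Set.eq_empty_iff_forall_notMem]
      rintro w ⟨hwI, hwz⟩
      exact hzI (hco.1.2.1 hwz hwI)
    obtain ⟨I', F', hco', hII', hzF'⟩ := exists_comax hco.1 hFz hdis2
    set p : ComaxPairs L := ⟨(I, F), hco⟩
    set q : ComaxPairs L := ⟨(I', F'), hco'⟩
    have hq : q ∈ @closure (ComaxPairs L) (tauL L) {p} := (mem_closure_tau p q).2 hII'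
    rw [h p, mem_closure_sigma] at hq
    exact hzF (hq (hzF' (le_refl z)))
end

section
/- Let L be a lattice. For every x ∈ L, i(ε_L(x)) = δ_L(x), where i is the transition function of 𝔐(L). -/
/-- i(ε_L(x)) = δ_L(x). -/
theorem iTrans_epsL {L : Type*} [Lattice L] (x : L) :
    iTrans (epsL x) = deltaL x := by
  ext p
  constructor
  · rintro ⟨q, hqx, hsub⟩ hxp
    have hdisj := q.2.2.2.1
    have : x ∈ q.1.1 ∩ q.1.2 := ⟨hsub hxp, hqx⟩
    rw [hdisj] at this
    exact this
  · intro hx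
    set I := p.1.1 with hI
    set S : Set (Set L × Set L) :=
      {r | IsLatIdeal r.1 ∧ IsLatFilter r.2 ∧ r.1 ∩ r.2 = ∅ ∧ I ⊆ r.1 ∧ x ∈ r.2} with hS
    have hIid : IsLatIdeal I := p.2.1
    have hstart : (I, {y | x ≤ y}) ∈ S := by
      refine ⟨hIid, ⟨⟨x, le_rfl⟩, fun a b hab ha => le_trans ha hab,
        fun a ha b hb => le_inf ha hb⟩, ?_, subset_rfl, le_rfl⟩
      ext z
      simp only [Set.mem_inter_iff, Set.mem_setOf_eq, Set.mem_empty_iff_false, iff_false,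
        not_and]
      intro hz hxz
      exact hx (hIid.2.1 hxz hz)
    have hchaincond : ∀ c ⊆ S, IsChain (· ≤ ·) c → ∀ y ∈ c,
        ∃ ub ∈ S, ∀ z ∈ c, z ≤ ub := by
      intro c hc hchain y hy
      refine ⟨(⋃ r ∈ c, r.1, ⋃ r ∈ c, r.2), ?_, ?_⟩
      · have hfst : ∀ r ∈ c, IsLatIdeal r.1 := fun r hr => (hc hr).1
        have hsnd : ∀ r ∈ c, IsLatFilter r.2 := fun r hr => (hc hr).2.1
        refine ⟨⟨?_, ?_, ?_⟩, ⟨?_, ?_, ?_⟩, ?_, ?_, ?_⟩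
        · obtain ⟨a, ha⟩ := (hfst y hy).1
          exact ⟨a, Set.mem_biUnion hy ha⟩
        · rintro a b hab hb
          simp only [Set.mem_iUnion] at hb ⊢
          obtain ⟨r, hr, hbr⟩ := hb
          exact ⟨r, hr, (hfst r hr).2.1 hab hbr⟩
        · rintro a ha b hb
          simp only [Set.mem_iUnion] at ha hb ⊢
          obtain ⟨r, hr, har⟩ := ha
          obtain ⟨s, hs, hbs⟩ := hb
          rcases hchain.total hr hs with h | h
          · exact ⟨s, hs, (hfst s hs).2.2 (h.1 har) hbs⟩
          · exact ⟨r, hr, (hfst r hr).2.2 har (h.1 hbs)⟩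
        · obtain ⟨a, ha⟩ := (hsnd y hy).1
          exact ⟨a, Set.mem_biUnion hy ha⟩
        · rintro a b hab ha
          simp only [Set.mem_iUnion] at ha ⊢
          obtain ⟨r, hr, har⟩ := ha
          exact ⟨r, hr, (hsnd r hr).2.1 hab har⟩
        · rintro a ha b hb
          simp only [Set.mem_iUnion] at ha hb ⊢
          obtain ⟨r, hr, har⟩ := ha
          obtain ⟨s, hs, hbs⟩ := hb
          rcases hchain.total hr hs with h | h
          · exact ⟨s, hs, (hsnd s hs).2.2 (h.2 har) hbs⟩
          · exact ⟨r, hr, (hsnd r hr).2.2 har (h.2 hbs)⟩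
        · ext z
          simp only [Set.mem_inter_iff, Set.mem_iUnion, Set.mem_empty_iff_false, iff_false,
            not_and]
          rintro ⟨r, hr, hzr⟩ ⟨s, hs, hzs⟩
          rcases hchain.total hr hs with h | h
          · have : z ∈ s.1 ∩ s.2 := ⟨h.1 hzr, hzs⟩
            rw [(hc hs).2.2.1] at this; exact this
          · have : z ∈ r.1 ∩ r.2 := ⟨hzr, h.2 hzs⟩
            rw [(hc hr).2.2.1] at this; exact this
        · exact (hc hy).2.2.2.1.trans (Set.subset_biUnion_of_mem hy)
        · exact Set.mem_biUnion hy (hc hy).2.2.2.2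
      · intro r hr
        exact ⟨Set.subset_biUnion_of_mem hr, Set.subset_biUnion_of_mem hr⟩
    obtain ⟨m, hle, hmS, hmax⟩ := zorn_le_nonempty₀ S hchaincond _ hstart
    obtain ⟨hmid, hmfil, hmdisj, hIm, hxm⟩ := hmS
    refine ⟨⟨m, hmid, hmfil, hmdisj, ?_, ?_⟩, hxm, hIm⟩
    · intro J hJ hJm
      by_contra hne
      rw [Set.not_nonempty_iff_eq_empty] at hne
      have hJS : (J, m.2) ∈ S := ⟨hJ, hmfil, hne, hIm.trans hJm.1, hxm⟩
      have := hmax hJS ⟨hJm.1, subset_rfl⟩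
      exact hJm.2 this.1
    · intro K hK hKm
      by_contra hne
      rw [Set.not_nonempty_iff_eq_empty] at hne
      have hKS : (m.1, K) ∈ S := ⟨hmid, hK, hne, hIm, hKm.1 hxm⟩
      have := hmax hKS ⟨subset_rfl, hKm.1⟩
      exact hKm.2 this.2
end

section
/- Let f : L → N be a quasi-proper lattice homomorphism, i.e. f preserves ⊔ and ⊓ and for every comaximal pair (I,F) of N, the pair (f⁻¹(I), f⁻¹(F)) is a comaximal pair of L. Then the induced map spec_B(f) : 𝔐(N) → 𝔐(L), (I,F) ↦ (f⁻¹(I), f⁻¹(F)), satisfies spec_B(f)⁻¹(δ_L(x)) = δ_N(f(x)) and spec_B(f)⁻¹(ε_L(x)) = ε_N(f(x)) for all x ∈ L; consequently spec_B(f) is continuous as a map from (𝔐(N), τ_N) to (𝔐(L), τ_L) and as a map from (𝔐(N), σ_N) to (𝔐(L), σ_L). -/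
/-- a quasi-proper lattice homomorphism induces a map on comaximal
pairs whose preimages of δ and ε subbasic sets are subbasic, hence it is continuous
for both topologies. -/
theorem specB_map_strongly_bicontinuous {L N : Type*} [Lattice L] [Lattice N]
    (f : L → N)
    (hsup : ∀ a b : L, f (a ⊔ b) = f a ⊔ f b)
    (hinf : ∀ a b : L, f (a ⊓ b) = f a ⊓ f b)
    (hqp : ∀ p : ComaxPairs N, IsComaximalPair (f ⁻¹' p.1.1) (f ⁻¹' p.1.2))
    (g : ComaxPairs N → ComaxPairs L)
    (hg : ∀ p : ComaxPairs N, (g p).1 = (f ⁻¹' p.1.1, f ⁻¹' p.1.2)) :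
    (∀ x : L, g ⁻¹' deltaL x = deltaL (f x) ∧ g ⁻¹' epsL x = epsL (f x)) ∧
      @Continuous (ComaxPairs N) (ComaxPairs L) (tauL N) (tauL L) g ∧ @Continuous (ComaxPairs N) (ComaxPairs L) (sigmaL N) (sigmaL L) g := by
  have key : ∀ x : L, g ⁻¹' deltaL x = deltaL (f x) ∧ g ⁻¹' epsL x = epsL (f x) := by
    intro x
    constructor
    · ext p
      simp only [deltaL, Set.mem_preimage, Set.mem_setOf_eq, hg p]
    · ext p
      simp only [epsL, Set.mem_preimage, Set.mem_setOf_eq, hg p]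
  refine ⟨key, ?_, ?_⟩
  · apply continuous_generateFrom_iff.mpr
    rintro s ⟨x, rfl⟩
    rw [(key x).1]
    exact TopologicalSpace.isOpen_generateFrom_of_mem ⟨f x, rfl⟩
  · apply continuous_generateFrom_iff.mpr
    rintro s ⟨x, rfl⟩
    rw [(key x).2]
    exact TopologicalSpace.isOpen_generateFrom_of_mem ⟨f x, rfl⟩
end
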